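/- Assume there exist constants 0 < c < C < ∞ such that c·(y − x) ≤ h_i(y) − h_i(x) ≤ C·(y − x) for all i ∈ 𝐈 and all x, y with x*_i ≤ x ≤ y. Then the mapping F : [0,∞) → ℝ^I, where F(t) is the ⪕-greatest element of A_t, is Lipschitz continuous on [0,∞). -/

import Mathlib

noncomputable def argminSet {n : ℕ} (a : Fin n → ℝ) : Finset (Fin n) :=
  Finset.univ.filter (fun i => ∀ j, a i ≤ a j)

noncomputable def minval {n : ℕ} (a : Fin n → ℝ) : ℝ := ⨅ i, a i

/-- The restriction of `a` to the indices in `S`, reindexed by `Fin S.card`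
in increasing order. -/
noncomputable def restrictVec {n : ℕ} (S : Finset (Fin n)) (a : Fin n → ℝ) :
    Fin S.card → ℝ :=
  fun i => a (S.orderIsoOfFin rfl i).1

/-- The "min-sensitive" partial order `⪕` on `ℝⁿ` (Definition 1 of the paper):
for `n = 1` it is the usual order; for `n ≥ 2`, `a ⪕ b` iff (i) `a = b`, or
(ii) `min a < min b`, or (iii) `min a = min b` and `Argmin b ⊊ Argmin a`, or
(iv) `min a = min b`, `Argmin a = Argmin b ⊊ {1,...,n}` and the restrictions
of `a` and `b` to the complement of the common argmin set are related. -/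
noncomputable def msLE : (n : ℕ) → (Fin n → ℝ) → (Fin n → ℝ) → Prop
  | 0, _, _ => True
  | 1, a, b => a 0 ≤ b 0
  | n + 2, a, b =>
    a = b ∨
    minval a < minval b ∨
    (minval a = minval b ∧ argminSet b ⊂ argminSet a) ∨
    (minval a = minval b ∧ argminSet a = argminSet b ∧ argminSet a ⊂ Finset.univ ∧
      msLE ((argminSet a)ᶜ).card (restrictVec (argminSet a)ᶜ a) (restrictVec (argminSet a)ᶜ b))
termination_by n => n
decreasing_by
  have hne : (argminSet a).Nonempty := by
    obtain ⟨i, -, hi⟩ := Finset.exists_min_image Finset.univ a ⟨0, Finset.mem_univ 0⟩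
    refine ⟨i, ?_⟩
    unfold argminSet
    exact Finset.mem_filter.mpr ⟨Finset.mem_univ i, fun j => hi j (Finset.mem_univ j)⟩
  have h1 : 0 < (argminSet a).card := Finset.card_pos.mpr hne
  have h2 : ((argminSet a)ᶜ).card = Fintype.card (Fin (n + 2)) - (argminSet a).card :=
    Finset.card_compl _
  simp only [Fintype.card_fin] at h2
  omega

/-- `x*_i`: the supremum of the zero set of a function. -/
noncomputable def xstar (f : ℝ → ℝ) : ℝ := sSup {x | f x = 0}

/-- The admissible set `A_t`. -/
def admissible (I J : ℕ) (h : Fin I → ℝ → ℝ) (G : Fin J → Finset (Fin I)) (t : ℝ) :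
    Set (Fin I → ℝ) :=
  {a | (∀ i, a i ≤ t) ∧ ∀ j, (∑ i ∈ G j, h i (a i)) ≤ t}

/-- `F` is the `⪕`-greatest element of `A_t`. -/
def IsGreatestMS (I J : ℕ) (h : Fin I → ℝ → ℝ) (G : Fin J → Finset (Fin I)) (t : ℝ)
    (F : Fin I → ℝ) : Prop :=
  F ∈ admissible I J h G t ∧ ∀ a ∈ admissible I J h G t, msLE I a F

/-!
Let `x = F u` and `y = F v`. A greatest element cannot be improved: if `x'` agrees with `x` except
at coordinates where `x ≥ γ` and `x' > γ`, one of them with `x = γ`, then `x' ⪕ x` fails. So `F u`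
lies above `x*`, and if `x i0 < u` then, after the coordinates of `x` above `x i0` are lowered
towards `y`, some constraint `G j ∋ i0` is still active (else `x i0` could be raised). By strict
growth, every `k ∈ G j` then has `x k ≤ y k` or `x k ≤ x i0`. Comparing the sums over `G j` at the
levels `u` and `v` gives `c (y i0 - x i0) ≤ |u - v| + C Σ (x k - y k)⁺`, where the positive terms
come from coordinates with `min (x k) (y k) < min (x i0) (y i0)`. Induction on the number of
coordinates below `i0` in this sense bounds `|x i0 - y i0|` by a multiple of `|u - v|`.
-/

open Finset Filter Topology

section MinSensitiveOrder

variable {n : ℕ}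

theorem minval_le (v : Fin n → ℝ) (i : Fin n) : minval v ≤ v i :=
  ciInf_le (Set.finite_range v).bddBelow i

theorem mem_argminSet_iff {v : Fin n → ℝ} {i : Fin n} : i ∈ argminSet v ↔ v i = minval v := by
  have : Nonempty (Fin n) := ⟨i⟩
  simp only [argminSet, mem_filter, mem_univ, true_and]
  exact ⟨fun hi => le_antisymm (le_ciInf hi) (minval_le v i),
    fun hi j => hi ▸ minval_le v j⟩

theorem card_compl_argminSet_lt [NeZero n] (v : Fin n → ℝ) : (argminSet v)ᶜ.card < n := by
  obtain ⟨i, hi⟩ := Finite.exists_min v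
  have hne : (argminSet v).Nonempty := ⟨i, by simpa [argminSet] using hi⟩
  have := card_pos.2 hne
  have := NeZero.pos n
  rw [card_compl, Fintype.card_fin]
  omega

theorem not_msLE_of_raise : ∀ (n : ℕ) {v w : Fin n → ℝ} {γ : ℝ},
    (∀ i, v i ≠ w i → γ ≤ w i ∧ γ < v i) → (∃ i, w i = γ ∧ γ < v i) → ¬ msLE n v w
  | 0, _, _, _, _, ⟨i, _⟩ => i.elim0
  | 1, v, w, γ, _, ⟨i, hwi, hvi⟩ => by
    rw [msLE, ← Fin.fin_one_eq_zero i]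
    linarith
  | n + 2, v, w, γ, hdiff, ⟨i0, hwi0, hvi0⟩ => by
    have hgap : ∀ i, v i ≠ w i → minval w < v i := fun i hi =>
      (minval_le w i0).trans_lt (hwi0 ▸ (hdiff i hi).2)
    have hmin : minval w ≤ minval v := le_ciInf fun i => by
      by_cases hi : v i = w i
      · exact hi ▸ minval_le w i
      · exact (hgap i hi).le
    have hne : v i0 ≠ w i0 := by linarith
    rw [msLE]
    rintro (heq | hlt | ⟨heq, hsub⟩ | ⟨heq, -, -, hrec⟩)
    · exact hne (congrFun heq i0)
    · linarith
    · obtain ⟨i1, hi1v, hi1w⟩ := exists_of_ssubset hsub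
      rw [mem_argminSet_iff] at hi1v hi1w
      have hi1 : v i1 = w i1 := by
        by_contra hi1
        linarith [hgap i1 hi1]
      exact hi1w (by rw [← hi1, hi1v, heq])
    · set S := argminSet v
      have hi0 : i0 ∈ Sᶜ := by
        rw [mem_compl, mem_argminSet_iff, heq]
        exact (hgap i0 hne).ne'
      obtain ⟨k0, hk0⟩ := (Sᶜ.orderIsoOfFin rfl).surjective ⟨i0, hi0⟩
      have hk0' : (Sᶜ.orderIsoOfFin rfl k0 : Fin (n + 2)) = i0 := congrArg Subtype.val hk0
      refine not_msLE_of_raise _ (fun k hk => hdiff _ hk) ⟨k0, ?_, ?_⟩ hrec <;>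
        simp only [hk0', hwi0, hvi0]
termination_by n => n
decreasing_by exact card_compl_argminSet_lt v

end MinSensitiveOrder

/-- `lipConst c C I n` bounds `|x i - y i| / |u - v|` for greatest elements `x`, `y` of `A_u`, `A_v`
at coordinates `i` below which (in `min (x k) (y k)`) lie fewer than `n` coordinates. -/
noncomputable def lipConst (c C : ℝ) (I : ℕ) : ℕ → ℝ
  | 0 => 0
  | n + 1 => (1 + C * I * lipConst c C I n) / c + 1

theorem lipConst_nonneg {c C : ℝ} {I : ℕ} (hc : 0 ≤ c) (hC : 0 ≤ C) :
    ∀ n, 0 ≤ lipConst c C I n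
  | 0 => le_rfl
  | n + 1 => by
    have := lipConst_nonneg (I := I) hc hC n
    rw [lipConst]
    positivity

theorem strictMonoOn_Ici_of_growth {f : ℝ → ℝ} {a c : ℝ} (hc : 0 < c)
    (hf : ∀ x y, a ≤ x → x ≤ y → c * (y - x) ≤ f y - f x) : StrictMonoOn f (Set.Ici a) :=
  fun x hx y _ hxy => by nlinarith [hf x y hx hxy.le]

section Greatest

variable {I J : ℕ} {h : Fin I → ℝ → ℝ} {G : Fin J → Finset (Fin I)} {u v : ℝ}
  {x y : Fin I → ℝ} {c C M : ℝ}

theorem xstar_le_of_isGreatestMS (hnonneg : ∀ i x, 0 ≤ h i x) (hmono : ∀ i, Monotone (h i))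
    (hzero : ∀ i, ∃ x, h i x = 0) (hxle : ∀ i, xstar (h i) ≤ 0) (hu : 0 ≤ u)
    (hx : IsGreatestMS I J h G u x) (i : Fin I) : xstar (h i) ≤ x i := by
  by_contra! hlt
  obtain ⟨z, hz, hxz⟩ := exists_lt_of_lt_csSup (hzero i) hlt
  have hz' : h i (min z 0) = 0 :=
    le_antisymm ((hmono i (min_le_left z 0)).trans_eq hz) (hnonneg i _)
  set x' := Function.update x i (min z 0)
  have hle : ∀ k, h k (x' k) ≤ h k (x k) := fun k => by
    rcases eq_or_ne k i with rfl | hk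
    · simpa [x', hz'] using hnonneg k (x k)
    · simp [x', hk]
  have hmem : x' ∈ admissible I J h G u := by
    refine ⟨fun k => ?_, fun j => (sum_le_sum fun k _ => hle k).trans (hx.1.2 j)⟩
    rcases eq_or_ne k i with rfl | hk
    · simpa [x'] using Or.inr hu
    · simpa [x', hk] using hx.1.1 k
  refine not_msLE_of_raise I (γ := x i) (fun k hne => ?_) ⟨i, rfl, ?_⟩ (hx.2 x' hmem)
  · rcases eq_or_ne k i with rfl | hk
    · simp only [x', Function.update_self, lt_min_iff]
      exact ⟨le_rfl, hxz, hlt.trans_le (hxle k)⟩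
    · simp [x', hk] at hne
  · simp only [x', Function.update_self, lt_min_iff]
    exact ⟨hxz, hlt.trans_le (hxle i)⟩

/-- Lowering coordinates of a greatest element that lie above `x i0`, without crossing that level,
keeps some constraint through `i0` active: otherwise `x i0` could be raised. -/
theorem exists_active_of_lower_of_isGreatestMS (hcont : ∀ i, Continuous (h i))
    (hmono : ∀ i, Monotone (h i)) (hx : IsGreatestMS I J h G u x) {i0 : Fin I} (hcap : x i0 < u)
    {x' : Fin I → ℝ} (hle : x' ≤ x) (hi0 : x' i0 = x i0)
    (habove : ∀ k, x' k ≠ x k → x i0 < x' k) :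
    ∃ j, i0 ∈ G j ∧ u ≤ ∑ k ∈ G j, h k (x' k) := by
  by_contra! hslack
  set raise : ℝ → Fin I → ℝ := fun ε => Function.update x' i0 (x i0 + ε)
  have hraise_zero : raise 0 = x' := by simp [raise, ← hi0]
  have hev : ∀ᶠ ε in 𝓝 0, x i0 + ε < u ∧ ∀ j, ∑ k ∈ G j, h k (raise ε k) ≤ u := by
    refine Eventually.and ?_ (eventually_all.2 fun j => ?_)
    · exact (continuous_const.add continuous_id).tendsto' 0 (x i0) (by simp)
        |>.eventually (gt_mem_nhds hcap)
    by_cases hj : i0 ∈ G j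
    · have hcont_sum : Continuous fun ε => ∑ k ∈ G j, h k (raise ε k) := by
        simp only [raise]
        fun_prop
      refine (hcont_sum.tendsto 0).eventually (gt_mem_nhds ?_) |>.mono fun _ => le_of_lt
      simpa [hraise_zero] using hslack j hj
    · refine Eventually.of_forall fun ε => ?_
      calc ∑ k ∈ G j, h k (raise ε k) = ∑ k ∈ G j, h k (x' k) :=
            sum_congr rfl fun k hk => by simp [raise, ne_of_mem_of_not_mem hk hj]
        _ ≤ ∑ k ∈ G j, h k (x k) := sum_le_sum fun k _ => hmono k (hle k)
        _ ≤ u := hx.1.2 j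
  obtain ⟨ε, ⟨hεu, hsum⟩, hε⟩ :=
    ((hev.filter_mono nhdsWithin_le_nhds).and (self_mem_nhdsWithin (s := Set.Ioi 0))).exists
  have hmem : raise ε ∈ admissible I J h G u := by
    refine ⟨fun k => ?_, hsum⟩
    rcases eq_or_ne k i0 with rfl | hk
    · simpa [raise] using hεu.le
    · simpa [raise, hk] using (hle k).trans (hx.1.1 k)
  refine not_msLE_of_raise I (γ := x i0) (fun k hne => ?_) ⟨i0, rfl, ?_⟩ (hx.2 _ hmem)
  · rcases eq_or_ne k i0 with rfl | hk
    · simpa [raise] using hε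
    · simp only [raise, Function.update_of_ne hk] at hne ⊢
      exact ⟨(habove k hne).le.trans (hle k), habove k hne⟩
  · simpa [raise] using hε

theorem exists_active_of_isGreatestMS (hcont : ∀ i, Continuous (h i))
    (hmono : ∀ i, Monotone (h i)) (hstrict : ∀ i, StrictMonoOn (h i) (Set.Ici (xstar (h i))))
    (hx : IsGreatestMS I J h G u x) (hxlb : ∀ k, xstar (h k) ≤ x k)
    (hylb : ∀ k, xstar (h k) ≤ y k) {i0 : Fin I} (hcap : x i0 < u) :
    ∃ j, i0 ∈ G j ∧ ∑ k ∈ G j, h k (x k) = u ∧ ∀ k ∈ G j, x k ≤ y k ∨ x k ≤ x i0 := by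
  -- lower every coordinate above `x i0` towards `y`, but not below the midpoint with `x i0`
  set x' : Fin I → ℝ := fun k => min (x k) (max (y k) ((x k + x i0) / 2))
  have hle : x' ≤ x := fun k => min_le_left _ _
  have hi0 : x' i0 = x i0 := min_eq_left (le_max_of_le_right (by linarith))
  have habove : ∀ k, x' k ≠ x k → x i0 < x' k := fun k hk => by
    have hlt : max (y k) ((x k + x i0) / 2) < x k := by
      simpa [x', min_eq_left_iff] using hk
    rw [max_lt_iff] at hlt
    simp only [x', lt_min_iff, lt_max_iff]
    exact ⟨by linarith, Or.inr (by linarith)⟩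
  obtain ⟨j, hj, hu⟩ := exists_active_of_lower_of_isGreatestMS hcont hmono hx hcap hle hi0 habove
  have hhle : ∀ k ∈ G j, h k (x' k) ≤ h k (x k) := fun k _ => hmono k (hle k)
  have hsum : ∑ k ∈ G j, h k (x' k) = ∑ k ∈ G j, h k (x k) :=
    le_antisymm (sum_le_sum hhle) ((hx.1.2 j).trans hu)
  refine ⟨j, hj, le_antisymm (hx.1.2 j) (hu.trans hsum.le), fun k hk => ?_⟩
  have hxk : x' k = x k := (hstrict k).injOn (le_min (hxlb k) (le_max_of_le_left (hylb k)))
    (hxlb k) ((sum_eq_sum_iff_of_le hhle).1 hsum k hk)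
  rcases le_max_iff.1 (min_eq_left_iff.1 hxk) with hk | hk
  · exact Or.inl hk
  · exact Or.inr (by linarith)

theorem mul_sub_le_of_isGreatestMS (hcont : ∀ i, Continuous (h i))
    (hmono : ∀ i, Monotone (h i)) (hc : 0 < c) (hC : 0 ≤ C)
    (hgrowth : ∀ i, ∀ x y : ℝ, xstar (h i) ≤ x → x ≤ y →
      c * (y - x) ≤ h i y - h i x ∧ h i y - h i x ≤ C * (y - x))
    (hx : IsGreatestMS I J h G u x) (hy : IsGreatestMS I J h G v y)
    (hxlb : ∀ k, xstar (h k) ≤ x k) (hylb : ∀ k, xstar (h k) ≤ y k) (hM : 0 ≤ M) {i0 : Fin I}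
    (hxy : x i0 < y i0) (hxu : x i0 < u)
    (hlower : ∀ k, min (x k) (y k) < min (x i0) (y i0) → |x k - y k| ≤ M * |u - v|) :
    c * (y i0 - x i0) ≤ (1 + C * I * M) * |u - v| := by
  obtain ⟨j, hj, hactive, hlow⟩ := exists_active_of_isGreatestMS hcont hmono
    (fun i => strictMonoOn_Ici_of_growth hc fun x y hx hxy => (hgrowth i x y hx hxy).1)
    hx hxlb hylb hxu
  have hterm : ∀ k ∈ (G j).erase i0, h k (x k) - h k (y k) ≤ C * M * |u - v| := by
    intro k hk
    rcases le_or_gt (x k) (y k) with hxyk | hyxk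
    · have := hmono k hxyk
      have : 0 ≤ C * M * |u - v| := by positivity
      linarith
    have hxk : x k ≤ x i0 := (hlow k (mem_of_mem_erase hk)).resolve_left hyxk.not_ge
    have hdist : x k - y k ≤ M * |u - v| := by
      refine (le_abs_self _).trans (hlower k ?_)
      rw [min_eq_right hyxk.le, min_eq_left hxy.le]
      linarith
    calc h k (x k) - h k (y k) ≤ C * (x k - y k) := (hgrowth k (y k) (x k) (hylb k) hyxk.le).2
      _ ≤ C * M * |u - v| := by rw [mul_assoc]; exact mul_le_mul_of_nonneg_left hdist hC
  have hrest : ∑ k ∈ (G j).erase i0, (h k (x k) - h k (y k)) ≤ I * (C * M * |u - v|) := by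
    refine (sum_le_card_nsmul _ _ _ hterm).trans ?_
    rw [nsmul_eq_mul]
    gcongr
    simpa using card_le_univ ((G j).erase i0)
  rw [sum_sub_distrib] at hrest
  have hsplit_x := add_sum_erase (G j) (fun k => h k (x k)) hj
  have hsplit_y := add_sum_erase (G j) (fun k => h k (y k)) hj
  have hgrow := (hgrowth i0 (x i0) (y i0) (hxlb i0) hxy.le).1
  have hvu : v - u ≤ |u - v| := by rw [abs_sub_comm]; exact le_abs_self _
  linarith [hy.1.2 j]

theorem sub_le_of_isGreatestMS (hcont : ∀ i, Continuous (h i)) (hmono : ∀ i, Monotone (h i))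
    (hc : 0 < c) (hC : 0 ≤ C)
    (hgrowth : ∀ i, ∀ x y : ℝ, xstar (h i) ≤ x → x ≤ y →
      c * (y - x) ≤ h i y - h i x ∧ h i y - h i x ≤ C * (y - x))
    (hx : IsGreatestMS I J h G u x) (hy : IsGreatestMS I J h G v y)
    (hxlb : ∀ k, xstar (h k) ≤ x k) (hylb : ∀ k, xstar (h k) ≤ y k) (hM : 0 ≤ M) (i0 : Fin I)
    (hlower : ∀ k, min (x k) (y k) < min (x i0) (y i0) → |x k - y k| ≤ M * |u - v|) :
    y i0 - x i0 ≤ ((1 + C * I * M) / c + 1) * |u - v| := by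
  have hK : 0 ≤ (1 + C * I * M) / c := by positivity
  have huv := abs_nonneg (u - v)
  rcases le_or_gt (y i0) (x i0) with hyx | hxy
  · nlinarith
  rcases (hx.1.1 i0).eq_or_lt with hxu | hxu
  · nlinarith [hy.1.1 i0, le_abs_self (v - u), abs_sub_comm u v]
  have := mul_sub_le_of_isGreatestMS hcont hmono hc hC hgrowth hx hy hxlb hylb hM hxy hxu hlower
  have : y i0 - x i0 ≤ (1 + C * I * M) / c * |u - v| := by
    rw [div_mul_eq_mul_div, le_div_iff₀ hc]
    linarith
  linarith

theorem abs_sub_le_of_isGreatestMS (hcont : ∀ i, Continuous (h i)) (hmono : ∀ i, Monotone (h i))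
    (hc : 0 < c) (hC : 0 ≤ C)
    (hgrowth : ∀ i, ∀ x y : ℝ, xstar (h i) ≤ x → x ≤ y →
      c * (y - x) ≤ h i y - h i x ∧ h i y - h i x ≤ C * (y - x))
    (hx : IsGreatestMS I J h G u x) (hy : IsGreatestMS I J h G v y)
    (hxlb : ∀ k, xstar (h k) ≤ x k) (hylb : ∀ k, xstar (h k) ≤ y k) (hM : 0 ≤ M) (i0 : Fin I)
    (hlower : ∀ k, min (x k) (y k) < min (x i0) (y i0) → |x k - y k| ≤ M * |u - v|) :
    |x i0 - y i0| ≤ ((1 + C * I * M) / c + 1) * |u - v| := by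
  refine abs_sub_le_iff.2 ⟨?_, sub_le_of_isGreatestMS hcont hmono hc hC hgrowth hx hy hxlb hylb
    hM i0 hlower⟩
  rw [abs_sub_comm u v]
  refine sub_le_of_isGreatestMS hcont hmono hc hC hgrowth hy hx hylb hxlb hM i0 fun k hk => ?_
  rw [abs_sub_comm, abs_sub_comm v u]
  exact hlower k (by rwa [min_comm (x k), min_comm (x i0)])

theorem abs_sub_le_lipConst_mul (hcont : ∀ i, Continuous (h i)) (hmono : ∀ i, Monotone (h i))
    (hc : 0 < c) (hC : 0 ≤ C)
    (hgrowth : ∀ i, ∀ x y : ℝ, xstar (h i) ≤ x → x ≤ y →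
      c * (y - x) ≤ h i y - h i x ∧ h i y - h i x ≤ C * (y - x))
    (hx : IsGreatestMS I J h G u x) (hy : IsGreatestMS I J h G v y)
    (hxlb : ∀ k, xstar (h k) ≤ x k) (hylb : ∀ k, xstar (h k) ≤ y k) :
    ∀ n i, #{k | min (x k) (y k) < min (x i) (y i)} < n → |x i - y i| ≤ lipConst c C I n * |u - v|
  | 0, _, hi => absurd hi (Nat.not_lt_zero _)
  | n + 1, i, hi => by
    refine abs_sub_le_of_isGreatestMS hcont hmono hc hC hgrowth hx hy hxlb hylb
      (lipConst_nonneg hc.le hC n) i fun k hk => abs_sub_le_lipConst_mul hcont hmono hc hC hgrowth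
        hx hy hxlb hylb n k (Nat.lt_of_lt_of_le (card_lt_card ?_) (Nat.le_of_lt_succ hi))
    refine ⟨fun m hm => ?_, fun hsub => ?_⟩
    · simp only [mem_filter, mem_univ, true_and] at hm ⊢
      exact hm.trans hk
    · exact lt_irrefl _ (mem_filter.1 (hsub (mem_filter.2 ⟨mem_univ k, hk⟩))).2

end Greatest

theorem F_lipschitz_general
    (I J : ℕ)
    (h : Fin I → ℝ → ℝ)
    (hcont : ∀ i, Continuous (h i))
    (hnonneg : ∀ i x, 0 ≤ h i x)
    (hmono : ∀ i, Monotone (h i))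
    (hzero : ∀ i, ∃ x, h i x = 0)
    (hxle : ∀ i, xstar (h i) ≤ 0)
    (G : Fin J → Finset (Fin I))
    (c C : ℝ) (hc : 0 < c) (hcC : c < C)
    (hgrowth : ∀ i, ∀ x y : ℝ, xstar (h i) ≤ x → x ≤ y →
      c * (y - x) ≤ h i y - h i x ∧ h i y - h i x ≤ C * (y - x))
    (F : ℝ → Fin I → ℝ)
    (hF : ∀ t : ℝ, 0 ≤ t → IsGreatestMS I J h G t (F t)) :
    ∃ K : NNReal, LipschitzOnWith K F (Set.Ici 0) := by
  have hC : 0 ≤ C := (hc.trans hcC).le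
  have hK := lipConst_nonneg (I := I) hc.le hC (I + 1)
  have hlb (t : ℝ) (ht : 0 ≤ t) : ∀ k, xstar (h k) ≤ F t k :=
    xstar_le_of_isGreatestMS hnonneg hmono hzero hxle ht (hF t ht)
  refine ⟨(lipConst c C I (I + 1)).toNNReal, LipschitzOnWith.of_dist_le_mul fun u hu v hv => ?_⟩
  rw [Real.coe_toNNReal _ hK]
  refine (dist_pi_le_iff (mul_nonneg hK dist_nonneg)).2 fun i => ?_
  rw [Real.dist_eq, Real.dist_eq]
  refine abs_sub_le_lipConst_mul hcont hmono hc hC hgrowth (hF u hu) (hF v hv) (hlb u hu) (hlb v hv)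
    (I + 1) i (Nat.lt_succ_of_le ?_)
  simpa using card_filter_le (univ : Finset (Fin I)) _

/-- Theorem 2 of the paper: under the two-sided linear growth condition
`c (y - x) ≤ h_i(y) - h_i(x) ≤ C (y - x)` for `x*_i ≤ x ≤ y`, the mapping `F` is
Lipschitz continuous on `[0, ∞)`. -/
theorem F_lipschitz
    (I J : ℕ) (hI : 0 < I) (hJ : 0 < J)
    (h : Fin I → ℝ → ℝ)
    (hcont : ∀ i, Continuous (h i))
    (hnonneg : ∀ i x, 0 ≤ h i x)
    (hmono : ∀ i, Monotone (h i))
    (htop : ∀ i, Filter.Tendsto (h i) Filter.atTop Filter.atTop)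
    (hzero : ∀ i, ∃ x, h i x = 0)
    (hxle : ∀ i, xstar (h i) ≤ 0)
    (G : Fin J → Finset (Fin I))
    (hGinj : Function.Injective G)
    (hGne : ∀ j, (G j).Nonempty)
    (hGcover : ∀ i, ∃ j, i ∈ G j)
    (c C : ℝ) (hc : 0 < c) (hcC : c < C)
    (hgrowth : ∀ i, ∀ x y : ℝ, xstar (h i) ≤ x → x ≤ y →
      c * (y - x) ≤ h i y - h i x ∧ h i y - h i x ≤ C * (y - x))
    (F : ℝ → Fin I → ℝ)
    (hF : ∀ t : ℝ, 0 ≤ t → IsGreatestMS I J h G t (F t)) :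
    ∃ K : NNReal, LipschitzOnWith K F (Set.Ici 0) :=
  F_lipschitz_general I J h hcont hnonneg hmono hzero hxle G c C hc hcC hgrowth F hF
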